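/- For μ, η ∈ F^{l₂+l₃}, the S(l₁,l₂,l₃;0,Γ)-modules A_μ and A_η are isomorphic if and only if μ − η ∈ Γ. -/

import Mathlib

open scoped BigOperators

namespace SDF

variable (F : Type) [Field F] [IsAlgClosed F] [CharZero F]
variable (l₁ l₂ l₃ : ℕ) (Γ : AddSubgroup (Fin (l₂ + l₃) → F))

/-- The semigroup algebra `A(l₁,l₂,l₃;Γ) = F[Γ × ℕ^{l₁+l₂}]`,
with basis `x^α t^i` for `α ∈ Γ`, `i ∈ ℕ^{l₁+l₂}`. -/
abbrev Alg : Type := AddMonoidAlgebra F (↥Γ × (Fin (l₁ + l₂) →₀ ℕ))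

/-- The basis monomial `x^α t^i`. -/
noncomputable def mono (α : Γ) (i : Fin (l₁ + l₂) →₀ ℕ) : Alg F l₁ l₂ l₃ Γ :=
  AddMonoidAlgebra.single (α, i) 1

/-- The `p`-th coordinate of `α ∈ Γ ⊆ F^{l₂+l₃}`, with the convention `α_p = 0` for `p ≤ l₁`. -/
def acoord (p : Fin (l₁ + l₂ + l₃)) (α : Γ) : F :=
  if h : l₁ ≤ (p : ℕ) then (α : Fin (l₂ + l₃) → F) ⟨(p : ℕ) - l₁, by have := p.isLt; omega⟩
  else 0

/-- The `p`-th coordinate of a general `μ ∈ F^{l₂+l₃}`, with the convention `μ_p = 0` for `p ≤ l₁`. -/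
def fcoord (p : Fin (l₁ + l₂ + l₃)) (μ : Fin (l₂ + l₃) → F) : F :=
  if h : l₁ ≤ (p : ℕ) then μ ⟨(p : ℕ) - l₁, by have := p.isLt; omega⟩ else 0

/-- The `p`-th component of `i ∈ ℕ^{l₁+l₂}`, with the convention `i_p = 0` for `p > l₁+l₂`. -/
def icoord (p : Fin (l₁ + l₂ + l₃)) (i : Fin (l₁ + l₂) →₀ ℕ) : ℕ :=
  if h : (p : ℕ) < l₁ + l₂ then i ⟨(p : ℕ), h⟩ else 0

/-- `i - 1_[p]` (truncated subtraction; only used with coefficient `i_p`). -/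
noncomputable def lower (p : Fin (l₁ + l₂ + l₃)) (i : Fin (l₁ + l₂) →₀ ℕ) : Fin (l₁ + l₂) →₀ ℕ :=
  if h : (p : ℕ) < l₁ + l₂ then i - Finsupp.single ⟨(p : ℕ), h⟩ 1 else i

/-- The derivation `∂_p` of `A(l₁,l₂,l₃;Γ)`:
`∂_p(x^α t^i) = α_p x^α t^i + i_p x^α t^{i - 1_[p]}`. -/
noncomputable def pd (p : Fin (l₁ + l₂ + l₃)) :
    Alg F l₁ l₂ l₃ Γ →ₗ[F] Alg F l₁ l₂ l₃ Γ :=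
  (Finsupp.lsum F fun g : ↥Γ × (Fin (l₁ + l₂) →₀ ℕ) =>
    LinearMap.toSpanSingleton F (Alg F l₁ l₂ l₃ Γ)
      (acoord F l₁ l₂ l₃ Γ p g.1 • mono F l₁ l₂ l₃ Γ g.1 g.2
        + (icoord l₁ l₂ l₃ p g.2 : F) • mono F l₁ l₂ l₃ Γ g.1 (lower l₁ l₂ l₃ p g.2)))
    ∘ₗ (AddMonoidAlgebra.coeffLinearEquiv F).toLinearMap

/-- The Witt algebra `W(l₁,l₂,l₃;Γ) = A·D`; the tuple `u : Wt` represents `Σ_p u_p ∂_p`. -/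
abbrev Wt : Type := Fin (l₁ + l₂ + l₃) → Alg F l₁ l₂ l₃ Γ

/-- The Lie bracket of `W(l₁,l₂,l₃;Γ)`:
`[Σ_p u_p ∂_p, Σ_q v_q ∂_q] = Σ_{p,q} (u_p ∂_p(v_q) - v_p ∂_p(u_q)) ∂_q`. -/
noncomputable def wbr (u v : Wt F l₁ l₂ l₃ Γ) : Wt F l₁ l₂ l₃ Γ :=
  fun r => ∑ p, (u p * pd F l₁ l₂ l₃ Γ p (v r) - v p * pd F l₁ l₂ l₃ Γ p (u r))

/-- `D_{p,q}(u) = ∂_p(u) ∂_q - ∂_q(u) ∂_p`. -/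
noncomputable def Dpq (p q : Fin (l₁ + l₂ + l₃)) (u : Alg F l₁ l₂ l₃ Γ) :
    Wt F l₁ l₂ l₃ Γ :=
  Pi.single q (pd F l₁ l₂ l₃ Γ p u) - Pi.single p (pd F l₁ l₂ l₃ Γ q u)

/-- The divergence-free algebra `S(l₁,l₂,l₃;0,Γ) = Span{D_{p,q}(u)}`. -/
noncomputable def Ssub : Submodule F (Wt F l₁ l₂ l₃ Γ) :=
  Submodule.span F {w | ∃ p q u, w = Dpq F l₁ l₂ l₃ Γ p q u}

/-- `Γ` is nondegenerate: it contains an `F`-basis of `F^{l₂+l₃}`, i.e. it spans. -/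
def Nondeg : Prop := Submodule.span F (Γ : Set (Fin (l₂ + l₃) → F)) = ⊤

/-- The divergence `div(Σ_p u_p ∂_p) = Σ_p ∂_p(u_p)`. -/
noncomputable def dvg (w : Wt F l₁ l₂ l₃ Γ) : Alg F l₁ l₂ l₃ Γ :=
  ∑ p, pd F l₁ l₂ l₃ Γ p (w p)

/-- The action of `Σ_p u_p ∂_p ∈ W` on `A_μ` (the space `A` with basis `v_{β,i}` the monomials):
`(u ∂_p) . v = u * (∂_p + μ_p) v`. On basis elements this gives exactly the defining formulas
of the module `A_μ`. -/
noncomputable def actW (μ : Fin (l₂ + l₃) → F) (X : Wt F l₁ l₂ l₃ Γ) :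
    Alg F l₁ l₂ l₃ Γ →ₗ[F] Alg F l₁ l₂ l₃ Γ :=
  ∑ p, (LinearMap.mulLeft F (X p)).comp
    (pd F l₁ l₂ l₃ Γ p + fcoord F l₁ l₂ l₃ p μ • LinearMap.id)

/-- The element `Σ_p a_p ∂_p` of `D ⊆ W`. -/
noncomputable def wD (a : Fin (l₁ + l₂ + l₃) → F) : Wt F l₁ l₂ l₃ Γ :=
  fun p => algebraMap F (Alg F l₁ l₂ l₃ Γ) (a p)

/-- The element `∂_p ∈ W`. -/
noncomputable def wdelta (p : Fin (l₁ + l₂ + l₃)) : Wt F l₁ l₂ l₃ Γ :=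
  Pi.single p 1

/-- `β(∂) = Σ_{p>l₁} a_p β_p` for `∂ = Σ_p a_p ∂_p`. -/
def beval (β : Fin (l₂ + l₃) → F) (a : Fin (l₁ + l₂ + l₃) → F) : F :=
  ∑ p, a p * fcoord F l₁ l₂ l₃ p β

/-!
If `μ - η = γ ∈ Γ`, multiplication by `x^γ` is an isomorphism `A_μ ≅ A_η`.

Conversely, for `α ∈ Γ` the element `D_{p,q}(x^α)` acts on `A_θ` triangularly with respect to
the `t`-degree: it sends `x^β t^i` to `m(α, β + θ) x^{α+β} t^i` plus terms of lower degree, where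
`m(u, v) = u_p v_q - u_q v_p`. Since `m(α, α) = 0`, the composites `D(x^α) D(x^{-α})` and
`D(x^α)² D(x^{-2α})` act on `1 ∈ A_μ` by `-s²` and `-2s³`, `s = m(α, μ)`. An isomorphism sends `1`
to a vector `w` with a leading monomial `x^{β₀} t^i`, on which the same composites act in `A_η`
by `-t²` and `-2t³`, `t = m(α, β₀ + η)`. Hence `s = t`, i.e. `m(α, μ - η - β₀) = 0` for all
`α ∈ Γ`, and as `Γ` spans, `μ - η = β₀ ∈ Γ`.
-/

end SDF

namespace SDF

variable {F : Type} [Field F] {l₁ l₂ l₃ : ℕ} {Γ : AddSubgroup (Fin (l₂ + l₃) → F)}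

local notation "𝔸" => Alg F l₁ l₂ l₃ Γ
local notation "𝕄" => mono F l₁ l₂ l₃ Γ

section Coordinates

variable (l₁) in
def fcoordL (p : Fin (l₁ + l₂ + l₃)) : (Fin (l₂ + l₃) → F) →ₗ[F] F where
  toFun := fcoord F l₁ l₂ l₃ p
  map_add' x y := by unfold fcoord; split <;> simp
  map_smul' c x := by unfold fcoord; split <;> simp

lemma fcoord_add (p : Fin (l₁ + l₂ + l₃)) (x y : Fin (l₂ + l₃) → F) :
    fcoord F l₁ l₂ l₃ p (x + y) = fcoord F l₁ l₂ l₃ p x + fcoord F l₁ l₂ l₃ p y :=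
  map_add (fcoordL l₁ p) x y

lemma acoord_eq_fcoord (p : Fin (l₁ + l₂ + l₃)) (α : Γ) :
    acoord F l₁ l₂ l₃ Γ p α = fcoord F l₁ l₂ l₃ p α := rfl

lemma fcoord_shift (x : Fin (l₂ + l₃) → F) (k : Fin (l₂ + l₃)) :
    fcoord F l₁ l₂ l₃ ⟨l₁ + k, by omega⟩ x = x k := by
  simp [fcoord]

variable (l₁) in
def minor (p q : Fin (l₁ + l₂ + l₃)) :
    (Fin (l₂ + l₃) → F) →ₗ[F] (Fin (l₂ + l₃) → F) →ₗ[F] F :=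
  LinearMap.mk₂ F (fun u v => fcoordL l₁ p u * fcoordL l₁ q v - fcoordL l₁ q u * fcoordL l₁ p v)
    (fun _ _ _ => by simp only [map_add]; ring)
    (fun _ _ _ => by simp only [map_smul, smul_eq_mul]; ring)
    (fun _ _ _ => by simp only [map_add]; ring)
    (fun _ _ _ => by simp only [map_smul, smul_eq_mul]; ring)

lemma minor_apply (p q : Fin (l₁ + l₂ + l₃)) (u v : Fin (l₂ + l₃) → F) :
    minor l₁ p q u v = fcoord F l₁ l₂ l₃ p u * fcoord F l₁ l₂ l₃ q v
      - fcoord F l₁ l₂ l₃ q u * fcoord F l₁ l₂ l₃ p v := rfl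

@[simp]
lemma minor_self (p q : Fin (l₁ + l₂ + l₃)) (u : Fin (l₂ + l₃) → F) : minor l₁ p q u u = 0 := by
  rw [minor_apply]; ring

end Coordinates

section Monomials

lemma mono_mul (α β : Γ) (i j : Fin (l₁ + l₂) →₀ ℕ) : 𝕄 α i * 𝕄 β j = 𝕄 (α + β) (i + j) := by
  simp [mono, AddMonoidAlgebra.single_mul_single]

lemma mono_zero_zero : 𝕄 0 0 = 1 := rfl

lemma single_eq_smul_mono (z : Γ × (Fin (l₁ + l₂) →₀ ℕ)) (c : F) :
    (AddMonoidAlgebra.single z c : 𝔸) = c • 𝕄 z.1 z.2 := by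
  simp [mono, AddMonoidAlgebra.smul_single]

lemma pd_mono (p : Fin (l₁ + l₂ + l₃)) (β : Γ) (i : Fin (l₁ + l₂) →₀ ℕ) :
    pd F l₁ l₂ l₃ Γ p (𝕄 β i) = acoord F l₁ l₂ l₃ Γ p β • 𝕄 β i
      + (icoord l₁ l₂ l₃ p i : F) • 𝕄 β (lower l₁ l₂ l₃ p i) := by
  simp [pd, mono]

lemma pd_mono_zero (p : Fin (l₁ + l₂ + l₃)) (β : Γ) :
    pd F l₁ l₂ l₃ Γ p (𝕄 β 0) = acoord F l₁ l₂ l₃ Γ p β • 𝕄 β 0 := by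
  simp [pd_mono, icoord]

lemma degree_lower_lt (r : Fin (l₁ + l₂ + l₃)) (i : Fin (l₁ + l₂) →₀ ℕ)
    (h : icoord l₁ l₂ l₃ r i ≠ 0) : (lower l₁ l₂ l₃ r i).degree < i.degree := by
  unfold icoord at h
  split at h
  case isTrue hr =>
    have hle : Finsupp.single ⟨r, hr⟩ 1 ≤ i :=
      Finsupp.single_le_iff.2 (Nat.one_le_iff_ne_zero.2 h)
    have hsplit := congrArg Finsupp.degree (tsub_add_cancel_of_le hle)
    rw [map_add, Finsupp.degree_single] at hsplit
    simp only [lower, dif_pos hr]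
    omega
  case isFalse => exact absurd rfl h

end Monomials

section Triangular

variable (F l₁ l₂ l₃ Γ) in
noncomputable def degLT (d : ℕ) : Submodule F 𝔸 :=
  Submodule.span F {x | ∃ β i, i.degree < d ∧ x = 𝕄 β i}

lemma mono_mem_degLT {d : ℕ} (β : Γ) {i : Fin (l₁ + l₂) →₀ ℕ} (hi : i.degree < d) :
    𝕄 β i ∈ degLT F l₁ l₂ l₃ Γ d :=
  Submodule.subset_span ⟨β, i, hi, rfl⟩

lemma degLT_mono {d d' : ℕ} (h : d ≤ d') : degLT F l₁ l₂ l₃ Γ d ≤ degLT F l₁ l₂ l₃ Γ d' :=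
  Submodule.span_mono fun _ ⟨β, i, hi, hx⟩ => ⟨β, i, hi.trans_le h, hx⟩

lemma smul_mono_lower_mem_degLT (c : F) (r : Fin (l₁ + l₂ + l₃)) (β : Γ)
    (i : Fin (l₁ + l₂) →₀ ℕ) :
    (c * icoord l₁ l₂ l₃ r i) • 𝕄 β (lower l₁ l₂ l₃ r i) ∈ degLT F l₁ l₂ l₃ Γ i.degree := by
  by_cases h : icoord l₁ l₂ l₃ r i = 0
  · simp [h]
  · exact Submodule.smul_mem _ _ (mono_mem_degLT β (degree_lower_lt r i h))

lemma coeff_eq_zero_of_mem_degLT {d : ℕ} {x : 𝔸} (hx : x ∈ degLT F l₁ l₂ l₃ Γ d)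
    {z : Γ × (Fin (l₁ + l₂) →₀ ℕ)} (hz : d ≤ z.2.degree) : x.coeff z = 0 := by
  induction hx using Submodule.span_induction with
  | mem x hx =>
    obtain ⟨β, i, hi, rfl⟩ := hx
    have : (β, i) ≠ z := fun h => by subst h; dsimp only at hz; omega
    simp [mono, this]
  | zero => rfl
  | add x y _ _ hx hy => simp [AddMonoidAlgebra.coeff_add, hx, hy]
  | smul c x _ hx => simp [AddMonoidAlgebra.coeff_smul, hx]

variable (F l₁ l₂ l₃ Γ) in
def IsTriangular (γ : Γ) (c : Γ → F) (T : 𝔸 →ₗ[F] 𝔸) : Prop :=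
  ∀ β i, T (𝕄 β i) - c β • 𝕄 (γ + β) i ∈ degLT F l₁ l₂ l₃ Γ i.degree

namespace IsTriangular

variable {γ γ' : Γ} {c c' : Γ → F} {T T' : Alg F l₁ l₂ l₃ Γ →ₗ[F] Alg F l₁ l₂ l₃ Γ}

lemma map_degLT (hT : IsTriangular F l₁ l₂ l₃ Γ γ c T) {d : ℕ} {x : 𝔸}
    (hx : x ∈ degLT F l₁ l₂ l₃ Γ d) : T x ∈ degLT F l₁ l₂ l₃ Γ d := by
  refine (Submodule.span_le (p := (degLT F l₁ l₂ l₃ Γ d).comap T)).2 ?_ hx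
  rintro _ ⟨β, i, hi, rfl⟩
  have h := degLT_mono hi.le (hT β i)
  simpa using Submodule.add_mem _ h (Submodule.smul_mem _ (c β) (mono_mem_degLT (γ + β) hi))

lemma comp (hT : IsTriangular F l₁ l₂ l₃ Γ γ c T) (hT' : IsTriangular F l₁ l₂ l₃ Γ γ' c' T') :
    IsTriangular F l₁ l₂ l₃ Γ (γ' + γ) (fun β => c' (γ + β) * c β) (T' ∘ₗ T) := by
  intro β i
  have key : T' (T (𝕄 β i)) - (c' (γ + β) * c β) • 𝕄 (γ' + γ + β) i
      = c β • (T' (𝕄 (γ + β) i) - c' (γ + β) • 𝕄 (γ' + (γ + β)) i)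
        + T' (T (𝕄 β i) - c β • 𝕄 (γ + β) i) := by
    rw [map_sub, map_smul, add_assoc γ']
    module
  rw [LinearMap.comp_apply, key]
  exact Submodule.add_mem _ (Submodule.smul_mem _ _ (hT' (γ + β) i)) (hT'.map_degLT (hT β i))

lemma coeff_apply (hT : IsTriangular F l₁ l₂ l₃ Γ 0 c T) {w : 𝔸}
    {z₀ : Γ × (Fin (l₁ + l₂) →₀ ℕ)} (hmax : ∀ z ∈ w.coeff.support, z.2.degree ≤ z₀.2.degree) :
    (T w).coeff z₀ = c z₀.1 * w.coeff z₀ := by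
  classical
  have hterm : ∀ z ∈ w.coeff.support,
      (T (AddMonoidAlgebra.single z (w.coeff z))).coeff z₀
        = if z = z₀ then c z₀.1 * w.coeff z₀ else 0 := by
    intro z hz
    have herr := coeff_eq_zero_of_mem_degLT (hT z.1 z.2) (hmax z hz)
    rw [AddMonoidAlgebra.coeff_sub, Finsupp.sub_apply, sub_eq_zero] at herr
    rw [single_eq_smul_mono, map_smul, AddMonoidAlgebra.coeff_smul, Finsupp.smul_apply, herr]
    split_ifs with h
    · subst h; simp [mono, mul_comm]
    · simp [mono, h]
  conv_lhs => rw [← AddMonoidAlgebra.sum_coeff_single w]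
  rw [Finsupp.sum, map_sum, AddMonoidAlgebra.coeff_sum, Finsupp.finsetSum_apply,
    Finset.sum_congr rfl hterm, Finset.sum_ite_eq']
  split_ifs with h
  · rfl
  · simp [Finsupp.notMem_support_iff.1 h]

end IsTriangular

/-- `β₀` is the `Γ`-part of a monomial of maximal `t`-degree in `w`. -/
lemma exists_eigenvalue_eq {w : 𝔸} (hw : w ≠ 0) :
    ∃ β₀ : Γ, ∀ (c : Γ → F) (T : 𝔸 →ₗ[F] 𝔸) (f : F),
      IsTriangular F l₁ l₂ l₃ Γ 0 c T → T w = f • w → f = c β₀ := by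
  have hne : w.coeff.support.Nonempty := by simpa using hw
  obtain ⟨z₀, hz₀, hmax⟩ := w.coeff.support.exists_max_image (fun z => z.2.degree) hne
  refine ⟨z₀.1, fun c T f hT hTw => ?_⟩
  have h := hT.coeff_apply hmax
  rw [hTw, AddMonoidAlgebra.coeff_smul, Finsupp.smul_apply, smul_eq_mul] at h
  exact mul_right_cancel₀ (Finsupp.mem_support_iff.1 hz₀) h

end Triangular

section DivergenceFreeAction

variable (l₁) in
noncomputable def actD (θ : Fin (l₂ + l₃) → F) (γ : Γ) (p q : Fin (l₁ + l₂ + l₃)) : 𝔸 →ₗ[F] 𝔸 :=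
  actW F l₁ l₂ l₃ Γ θ (Dpq F l₁ l₂ l₃ Γ p q (𝕄 γ 0))

lemma Dpq_mem_Ssub (p q : Fin (l₁ + l₂ + l₃)) (u : 𝔸) :
    Dpq F l₁ l₂ l₃ Γ p q u ∈ Ssub F l₁ l₂ l₃ Γ :=
  Submodule.subset_span ⟨p, q, u, rfl⟩

lemma actD_apply (θ : Fin (l₂ + l₃) → F) (γ : Γ) (p q : Fin (l₁ + l₂ + l₃)) (v : 𝔸) :
    actD l₁ θ γ p q v
      = (acoord F l₁ l₂ l₃ Γ p γ • 𝕄 γ 0) * (pd F l₁ l₂ l₃ Γ q v + fcoord F l₁ l₂ l₃ q θ • v)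
        - (acoord F l₁ l₂ l₃ Γ q γ • 𝕄 γ 0)
          * (pd F l₁ l₂ l₃ Γ p v + fcoord F l₁ l₂ l₃ p θ • v) := by
  simp only [actD, actW, Dpq, pd_mono_zero, LinearMap.sum_apply, LinearMap.comp_apply,
    LinearMap.mulLeft_apply, Pi.sub_apply, Pi.single_apply, sub_mul, ite_mul, zero_mul,
    Finset.sum_sub_distrib, Finset.sum_ite_eq', Finset.mem_univ, if_true]
  simp

lemma actD_mono (θ : Fin (l₂ + l₃) → F) (γ β : Γ) (p q : Fin (l₁ + l₂ + l₃))
    (i : Fin (l₁ + l₂) →₀ ℕ) :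
    actD l₁ θ γ p q (𝕄 β i)
      = minor l₁ p q γ ((β : Fin (l₂ + l₃) → F) + θ) • 𝕄 (γ + β) i
        + (acoord F l₁ l₂ l₃ Γ p γ * icoord l₁ l₂ l₃ q i) • 𝕄 (γ + β) (lower l₁ l₂ l₃ q i)
        - (acoord F l₁ l₂ l₃ Γ q γ * icoord l₁ l₂ l₃ p i) • 𝕄 (γ + β) (lower l₁ l₂ l₃ p i) := by
  rw [actD_apply, pd_mono, pd_mono]
  simp only [smul_mul_assoc, mul_add, mul_smul_comm, mono_mul, zero_add, smul_smul, minor_apply,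
    acoord_eq_fcoord, fcoord_add]
  module

lemma actD_mono_zero (θ : Fin (l₂ + l₃) → F) (γ β : Γ) (p q : Fin (l₁ + l₂ + l₃)) :
    actD l₁ θ γ p q (𝕄 β 0) = minor l₁ p q γ ((β : Fin (l₂ + l₃) → F) + θ) • 𝕄 (γ + β) 0 := by
  simp [actD_mono, icoord]

lemma isTriangular_actD (θ : Fin (l₂ + l₃) → F) (γ : Γ) (p q : Fin (l₁ + l₂ + l₃)) :
    IsTriangular F l₁ l₂ l₃ Γ γ (fun β => minor l₁ p q γ ((β : Fin (l₂ + l₃) → F) + θ))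
      (actD l₁ θ γ p q) := by
  intro β i
  rw [actD_mono, add_sub_assoc, add_sub_cancel_left]
  exact Submodule.sub_mem _ (smul_mono_lower_mem_degLT _ q _ i) (smul_mono_lower_mem_degLT _ p _ i)

end DivergenceFreeAction

lemma eq_of_sq_eq_of_cube_eq {R : Type*} [CommRing R] [IsDomain R] {s t : R}
    (h2 : s ^ 2 = t ^ 2) (h3 : s ^ 3 = t ^ 3) : s = t := by
  rcases eq_or_ne t 0 with rfl | ht
  · simpa using h2
  · exact mul_left_cancel₀ (pow_ne_zero 2 ht) (by linear_combination h3 - s * h2)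

theorem exists_minor_eq_zero_of_intertwines [CharZero F] {μ η : Fin (l₂ + l₃) → F}
    (e : 𝔸 →ₗ[F] 𝔸) (he1 : e 1 ≠ 0)
    (he : ∀ γ p q v, e (actD l₁ μ γ p q v) = actD l₁ η γ p q (e v)) :
    ∃ β₀ : Γ, ∀ (α : Γ) (p q : Fin (l₁ + l₂ + l₃)),
      minor l₁ p q α (μ - η - (β₀ : Fin (l₂ + l₃) → F)) = 0 := by
  obtain ⟨β₀, hβ₀⟩ := exists_eigenvalue_eq he1
  have eigen : ∀ (c : Γ → F) (T T' : 𝔸 →ₗ[F] 𝔸) (f : F), IsTriangular F l₁ l₂ l₃ Γ 0 c T' →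
      (∀ v, e (T v) = T' (e v)) → T 1 = f • 1 → f = c β₀ := fun c T T' f hT' hTT' hT1 =>
    hβ₀ c T' f hT' (by rw [← hTT', hT1, map_smul])
  refine ⟨β₀, fun α p q => ?_⟩
  set s := minor l₁ p q α μ
  have h2 := eigen _ (actD l₁ μ α p q ∘ₗ actD l₁ μ (-α) p q) _ (-s ^ 2)
    (by simpa using (isTriangular_actD η (-α) p q).comp (isTriangular_actD η α p q))
    (fun v => by simp [he])
    (by rw [← mono_zero_zero]; simp [actD_mono_zero, smul_smul]; module)
  have h3 := eigen _ (actD l₁ μ α p q ∘ₗ actD l₁ μ α p q ∘ₗ actD l₁ μ (-(α + α)) p q) _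
    (-2 * s ^ 3)
    (by simpa using ((isTriangular_actD η (-(α + α)) p q).comp
      (isTriangular_actD η α p q)).comp (isTriangular_actD η α p q))
    (fun v => by simp [he])
    (by rw [← mono_zero_zero]; simp [actD_mono_zero, smul_smul]; module)
  have hst : s = minor l₁ p q α β₀ + minor l₁ p q α η :=
    eq_of_sq_eq_of_cube_eq (by linear_combination -h2) (by linear_combination (-1 / 2 : F) * h3)
  rw [map_sub, map_sub]
  linear_combination hst

lemma eq_zero_of_minor_eq_zero (h : 2 ≤ l₂ + l₃) (hΓ : Nondeg F l₂ l₃ Γ) {ρ : Fin (l₂ + l₃) → F}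
    (hρ : ∀ (α : Γ) (p q : Fin (l₁ + l₂ + l₃)), minor l₁ p q α ρ = 0) : ρ = 0 := by
  have hall : ∀ u p q, minor l₁ p q u ρ = 0 := by
    intro u p q
    have hker : Submodule.span F (Γ : Set (Fin (l₂ + l₃) → F))
        ≤ LinearMap.ker ((minor l₁ p q).flip ρ) :=
      Submodule.span_le.2 fun u hu => hρ ⟨u, hu⟩ p q
    rw [hΓ] at hker
    exact hker Submodule.mem_top
  funext k
  have := Fin.nontrivial_iff_two_le.2 h
  obtain ⟨k', hk'⟩ := exists_ne k
  simpa [minor_apply, fcoord_shift, hk'.symm] using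
    hall (Pi.single k' 1) ⟨l₁ + k, by omega⟩ ⟨l₁ + k', by omega⟩

lemma pd_mono_zero_mul (p : Fin (l₁ + l₂ + l₃)) (γ : Γ) (v : 𝔸) :
    pd F l₁ l₂ l₃ Γ p (𝕄 γ 0 * v)
      = acoord F l₁ l₂ l₃ Γ p γ • (𝕄 γ 0 * v) + 𝕄 γ 0 * pd F l₁ l₂ l₃ Γ p v := by
  induction v using AddMonoidAlgebra.induction_linear with
  | zero => simp
  | add f g hf hg =>
    rw [mul_add, map_add, hf, hg, map_add, mul_add, smul_add]
    abel
  | single z c =>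
    rw [single_eq_smul_mono, mul_smul_comm, map_smul, map_smul, mono_mul, zero_add, pd_mono,
      pd_mono]
    simp only [mul_add, mul_smul_comm, mono_mul, zero_add, acoord_eq_fcoord, AddSubgroup.coe_add,
      fcoord_add]
    module

lemma mono_zero_mul_actW (θ : Fin (l₂ + l₃) → F) (γ : Γ) (X : Wt F l₁ l₂ l₃ Γ) (v : 𝔸) :
    𝕄 γ 0 * actW F l₁ l₂ l₃ Γ (θ + γ) X v = actW F l₁ l₂ l₃ Γ θ X (𝕄 γ 0 * v) := by
  simp only [actW, LinearMap.sum_apply, LinearMap.comp_apply, LinearMap.add_apply,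
    LinearMap.smul_apply, LinearMap.id_apply, LinearMap.mulLeft_apply, Finset.mul_sum]
  refine Finset.sum_congr rfl fun r _ => ?_
  rw [pd_mono_zero_mul, fcoord_add, acoord_eq_fcoord]
  simp only [Algebra.smul_def, map_add]
  ring

variable (l₁ l₂ l₃) in
noncomputable def monoUnit (γ : Γ) : 𝔸ˣ where
  val := 𝕄 γ 0
  inv := 𝕄 (-γ) 0
  val_inv := by rw [mono_mul, add_neg_cancel, add_zero, mono_zero_zero]
  inv_val := by rw [mono_mul, neg_add_cancel, add_zero, mono_zero_zero]

end SDF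

namespace SDF

variable (F : Type) [Field F] [IsAlgClosed F] [CharZero F]
variable (l₁ l₂ l₃ : ℕ) (Γ : AddSubgroup (Fin (l₂ + l₃) → F))

theorem stmt11
    (h23 : 3 ≤ l₂ + l₃) (hΓ : Nondeg F l₂ l₃ Γ)
    (μ η : Fin (l₂ + l₃) → F) :
    (∃ e : Alg F l₁ l₂ l₃ Γ ≃ₗ[F] Alg F l₁ l₂ l₃ Γ,
        ∀ X ∈ Ssub F l₁ l₂ l₃ Γ, ∀ v : Alg F l₁ l₂ l₃ Γ,
          e (actW F l₁ l₂ l₃ Γ μ X v) = actW F l₁ l₂ l₃ Γ η X (e v)) ↔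
      μ - η ∈ Γ := by
  constructor
  · rintro ⟨e, he⟩
    obtain ⟨β₀, hβ₀⟩ := exists_minor_eq_zero_of_intertwines e.toLinearMap (by simp)
      fun γ p q v => he _ (Dpq_mem_Ssub p q _) v
    rw [sub_eq_zero.1 (eq_zero_of_minor_eq_zero (by omega) hΓ hβ₀)]
    exact β₀.2
  · intro h
    refine ⟨DistribMulAction.toLinearEquiv F _ (monoUnit l₁ l₂ l₃ ⟨μ - η, h⟩), fun X _ v => ?_⟩
    simpa [Units.smul_def, monoUnit] using mono_zero_mul_actW η ⟨μ - η, h⟩ X v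

end SDF
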